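/- arXiv:1507.06710 — 6 statements merged into one kernel-verified Lean document; each statement's English description precedes it below -/
import Mathlib

section
/- Let (M,d) be a metric space equipped with a Borel measure μ whose topological support is all of M. Let (k_t)_{t>0} be a family of continuous functions k_t : M × M → [0,∞) satisfying: (i) symmetry, k_t(x,y) = k_t(y,x) for all x,y and t > 0; (ii) the semigroup (Chapman–Kolmogorov) property, k_{s+t}(x,y) = ∫_M k_s(x,z)·k_t(z,y) dμ(z) for all s,t > 0 and x,y ∈ M; (iii) each section k_t(x,·) is square-integrable with respect to μ; and (iv) the approximate-identity property: for every bounded continuous g : M → ℝ and every x ∈ M, ∫_M k_t(x,y)·g(y) dμ(y) → g(x) as t → 0⁺. If for some T > 0 and x₁, x₂ ∈ M one has k_T(x₁,y) = k_T(x₂,y) for all y ∈ M, then x₁ = x₂. -/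
/-!
By the semigroup property and symmetry, `k t x y = ⟪k (t/2) x, k (t/2) y⟫` in `L²(μ)`, so
`k t x₁ = k t x₂` gives `‖k (t/2) x₁ - k (t/2) x₂‖² = 0`; as the sections are continuous and
`μ` charges every open set, `k (t/2) x₁ = k (t/2) x₂`. Iterating, the sections agree at all
times `T / 2ⁿ → 0⁺`, and the approximate-identity property then gives `g x₁ = g x₂` for every
bounded continuous `g`, e.g. `g = min (dist · x₂) 1`.
-/

open MeasureTheory Filter Topology

lemma MeasureTheory.Measure.isOpenPosMeasure_of_measure_ball_pos {M : Type*}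
    [PseudoMetricSpace M] [MeasurableSpace M] (μ : Measure M)
    (h : ∀ (x : M) (ε : ℝ), 0 < ε → 0 < μ (Metric.ball x ε)) : μ.IsOpenPosMeasure := by
  refine ⟨fun U hU ⟨x, hx⟩ hU0 => ?_⟩
  obtain ⟨ε, hε, hball⟩ := Metric.isOpen_iff.1 hU x hx
  exact (h x ε hε).ne' (measure_mono_null hball hU0)

section L2

variable {α : Type*} [MeasurableSpace α] {μ : Measure α}

lemma integral_sub_sq_of_memLp {f g : α → ℝ} (hf : MemLp f 2 μ) (hg : MemLp g 2 μ) :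
    ∫ x, (f x - g x) ^ 2 ∂μ =
      ∫ x, f x * f x ∂μ - 2 * ∫ x, f x * g x ∂μ + ∫ x, g x * g x ∂μ := by
  have hff : Integrable (fun x => f x * f x) μ := hf.integrable_mul hf
  have hfg : Integrable (fun x => f x * g x) μ := hf.integrable_mul hg
  have hgg : Integrable (fun x => g x * g x) μ := hg.integrable_mul hg
  calc ∫ x, (f x - g x) ^ 2 ∂μ
      = ∫ x, (f x * f x - 2 * (f x * g x) + g x * g x) ∂μ := by congr! 2; ring
    _ = _ := by
      rw [integral_add _ hgg, integral_sub hff (hfg.const_mul 2), integral_const_mul]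
      exact hff.sub (hfg.const_mul 2)

lemma Continuous.eq_of_integral_mul_self_eq_integral_mul [TopologicalSpace α]
    [OpensMeasurableSpace α] [μ.IsOpenPosMeasure] {f g : α → ℝ}
    (hf : Continuous f) (hg : Continuous g) (hf2 : MemLp f 2 μ) (hg2 : MemLp g 2 μ)
    (hff : ∫ x, f x * f x ∂μ = ∫ x, f x * g x ∂μ)
    (hgg : ∫ x, g x * g x ∂μ = ∫ x, f x * g x ∂μ) : f = g := by
  have hzero : ∫ x, (f x - g x) ^ 2 ∂μ = 0 := by
    rw [integral_sub_sq_of_memLp hf2 hg2, hff, hgg]; ring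
  have hsq : (fun x => (f x - g x) ^ 2) =ᵐ[μ] 0 :=
    (integral_eq_zero_iff_of_nonneg (fun x => sq_nonneg _) (hf2.sub hg2).integrable_sq).1 hzero
  refine (hf.ae_eq_iff_eq μ hg).1 ?_
  filter_upwards [hsq] with x hx
  simpa [sub_eq_zero] using hx

end L2

section HeatKernel

variable {α : Type*} [MeasurableSpace α] {μ : Measure α} {k : ℝ → α → α → ℝ}

lemma kernel_eq_integral_mul_half (hsymm : ∀ t : ℝ, 0 < t → ∀ x y : α, k t x y = k t y x)
    (hsemi : ∀ s t : ℝ, 0 < s → 0 < t → ∀ x y : α, k (s + t) x y = ∫ z, k s x z * k t z y ∂μ)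
    {t : ℝ} (ht : 0 < t) (x y : α) :
    k t x y = ∫ z, k (t / 2) x z * k (t / 2) y z ∂μ := by
  have ht2 : 0 < t / 2 := half_pos ht
  rw [← add_halves t, hsemi _ _ ht2 ht2, add_halves]
  simp_rw [hsymm _ ht2 _ y]

lemma kernel_half_eq_of_eq [TopologicalSpace α] [OpensMeasurableSpace α] [μ.IsOpenPosMeasure]
    (hsec : ∀ t : ℝ, 0 < t → ∀ x : α, Continuous (k t x))
    (hsymm : ∀ t : ℝ, 0 < t → ∀ x y : α, k t x y = k t y x)
    (hsemi : ∀ s t : ℝ, 0 < s → 0 < t → ∀ x y : α, k (s + t) x y = ∫ z, k s x z * k t z y ∂μ)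
    (hL2 : ∀ t : ℝ, 0 < t → ∀ x : α, MemLp (k t x) 2 μ)
    {t : ℝ} (ht : 0 < t) {x₁ x₂ : α} (h : k t x₁ = k t x₂) :
    k (t / 2) x₁ = k (t / 2) x₂ := by
  have ht2 : 0 < t / 2 := half_pos ht
  have hk := kernel_eq_integral_mul_half hsymm hsemi ht
  refine (hsec _ ht2 x₁).eq_of_integral_mul_self_eq_integral_mul (hsec _ ht2 x₂)
    (hL2 _ ht2 x₁) (hL2 _ ht2 x₂) ?_ ?_
  · rw [← hk, ← hk, congrFun h x₁, hsymm t ht x₂ x₁]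
  · rw [← hk, ← hk, ← h]

lemma kernel_div_two_pow_eq_of_eq [TopologicalSpace α] [OpensMeasurableSpace α]
    [μ.IsOpenPosMeasure]
    (hsec : ∀ t : ℝ, 0 < t → ∀ x : α, Continuous (k t x))
    (hsymm : ∀ t : ℝ, 0 < t → ∀ x y : α, k t x y = k t y x)
    (hsemi : ∀ s t : ℝ, 0 < s → 0 < t → ∀ x y : α, k (s + t) x y = ∫ z, k s x z * k t z y ∂μ)
    (hL2 : ∀ t : ℝ, 0 < t → ∀ x : α, MemLp (k t x) 2 μ)
    {T : ℝ} (hT : 0 < T) {x₁ x₂ : α} (h : k T x₁ = k T x₂) (n : ℕ) :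
    k (T / 2 ^ n) x₁ = k (T / 2 ^ n) x₂ := by
  induction n with
  | zero => simpa using h
  | succ n ih =>
    rw [pow_succ, ← div_div]
    exact kernel_half_eq_of_eq hsec hsymm hsemi hL2 (by positivity) ih

end HeatKernel

lemma tendsto_div_two_pow_nhdsGT_zero {T : ℝ} (hT : 0 < T) :
    Tendsto (fun n : ℕ => T / 2 ^ n) atTop (𝓝[>] 0) := by
  refine tendsto_nhdsWithin_iff.2 ⟨?_, .of_forall fun n => Set.mem_Ioi.2 (by positivity)⟩
  simpa [div_eq_mul_inv] using (tendsto_pow_atTop_nhds_zero_of_lt_one (r := (2 : ℝ)⁻¹)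
    (by norm_num) (by norm_num)).const_mul T

lemma eq_of_forall_bounded_continuous_eq {M : Type*} [MetricSpace M] {x₁ x₂ : M}
    (h : ∀ g : M → ℝ, Continuous g → (∃ C : ℝ, ∀ x : M, |g x| ≤ C) → g x₁ = g x₂) :
    x₁ = x₂ := by
  have hg := h (fun y : M => min (dist y x₂) 1) (by fun_prop)
    ⟨1, fun y => abs_le.2 ⟨by linarith [le_min (dist_nonneg (x := y) (y := x₂)) zero_le_one], min_le_right _ _⟩⟩
  by_contra hne
  have : 0 < min (dist x₁ x₂) 1 := lt_min (dist_pos.2 hne) one_pos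
  simp_all

theorem stmt_4_general
    {M : Type*} [MetricSpace M] [MeasurableSpace M] [BorelSpace M] (μ : Measure M)
    (hsupp : ∀ (x : M) (ε : ℝ), 0 < ε → 0 < μ (Metric.ball x ε))
    (k : ℝ → M → M → ℝ)
    (hcont : ∀ t : ℝ, 0 < t → Continuous (Function.uncurry (k t)))
    (hsymm : ∀ (t : ℝ), 0 < t → ∀ x y : M, k t x y = k t y x)
    (hsemi : ∀ (s t : ℝ), 0 < s → 0 < t → ∀ x y : M,
      k (s + t) x y = ∫ z, k s x z * k t z y ∂μ)
    (hL2 : ∀ (t : ℝ), 0 < t → ∀ x : M, MemLp (k t x) 2 μ)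
    (happrox : ∀ g : M → ℝ, Continuous g → (∃ C : ℝ, ∀ x : M, |g x| ≤ C) →
      ∀ x : M, Tendsto (fun t : ℝ => ∫ y, k t x y * g y ∂μ)
        (nhdsWithin 0 (Set.Ioi 0)) (nhds (g x)))
    (T : ℝ) (hT : 0 < T) (x₁ x₂ : M)
    (hker : ∀ y : M, k T x₁ y = k T x₂ y) :
    x₁ = x₂ := by
  have := μ.isOpenPosMeasure_of_measure_ball_pos hsupp
  have hsec (t : ℝ) (ht : 0 < t) (x : M) : Continuous (k t x) :=
    (hcont t ht).comp (Continuous.prodMk_right x)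
  have hfreq : ∃ᶠ t in 𝓝[>] 0, k t x₁ = k t x₂ :=
    (tendsto_div_two_pow_nhdsGT_zero hT).frequently <| .of_forall
      (kernel_div_two_pow_eq_of_eq hsec hsymm hsemi hL2 hT (funext hker))
  refine eq_of_forall_bounded_continuous_eq fun g hg hgb =>
    tendsto_nhds_unique_of_frequently_eq (happrox g hg hgb x₁) (happrox g hg hgb x₂) ?_
  exact hfreq.mono fun t ht => by rw [ht]

/-- An abstract heat-kernel family (symmetric, semigroup property, square-integrable
sections, approximate identity) on a metric measure space whose measure has full
topological support separates points: equal kernel sections at a fixed time force the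
centers to coincide. -/
theorem stmt_4
    {M : Type*} [MetricSpace M] [MeasurableSpace M] [BorelSpace M] (μ : Measure M)
    (hsupp : ∀ (x : M) (ε : ℝ), 0 < ε → 0 < μ (Metric.ball x ε))
    (k : ℝ → M → M → ℝ)
    (hcont : ∀ t : ℝ, 0 < t → Continuous (Function.uncurry (k t)))
    (hnonneg : ∀ (t : ℝ), 0 < t → ∀ x y : M, 0 ≤ k t x y)
    (hsymm : ∀ (t : ℝ), 0 < t → ∀ x y : M, k t x y = k t y x)
    (hsemi : ∀ (s t : ℝ), 0 < s → 0 < t → ∀ x y : M,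
      k (s + t) x y = ∫ z, k s x z * k t z y ∂μ)
    (hL2 : ∀ (t : ℝ), 0 < t → ∀ x : M, MemLp (k t x) 2 μ)
    (happrox : ∀ g : M → ℝ, Continuous g → (∃ C : ℝ, ∀ x : M, |g x| ≤ C) →
      ∀ x : M, Tendsto (fun t : ℝ => ∫ y, k t x y * g y ∂μ)
        (nhdsWithin 0 (Set.Ioi 0)) (nhds (g x)))
    (T : ℝ) (hT : 0 < T) (x₁ x₂ : M)
    (hker : ∀ y : M, k T x₁ y = k T x₂ y) :
    x₁ = x₂ :=
  stmt_4_general μ hsupp k hcont hsymm hsemi hL2 happrox T hT x₁ x₂ hker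
end

section
/- Let (M,d) be a metric space in which every pair of points x,y is joined by a constant-speed geodesic, i.e. a map γ : [0,1] → M with γ(0) = x, γ(1) = y, and d(γ(s),γ(t)) = |s−t|·d(x,y) for all s,t ∈ [0,1]. Let α ∈ (0,1], let ε, M_n > 0, and let a ∈ (0,1] be such that 1/a is a positive integer and M_n · a^α ≤ ε/3. Let S ⊆ M be a finite set such that every point of M is within distance ε/3 of some point of S, and let K be a positive integer such that for every x ∈ S, card{y ∈ S : d(x,y) ≤ ε} ≤ K. Then there exists a finite set F of functions from [0,1] to M with card F ≤ (card S) · K^{1/a} such that for every f : [0,1] → M satisfying d(f(t₁),f(t₂)) ≤ M_n·|t₁−t₂|^α for all t₁,t₂ ∈ [0,1], there exists f̂ ∈ F with sup_{t∈[0,1]} d(f(t),f̂(t)) ≤ 5ε/3. Moreover, each f̂ ∈ F takes values in S at the grid points ka (k = 0,1,…,1/a), is a constant-speed geodesic on each interval [ka,(k+1)a], and satisfies d(f̂(ka),f̂((k+1)a)) ≤ ε for each k. -/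
/-!
Sample `f` on the grid `k a`, `k = 0, …, n`, and replace each sample by a net point within
`ε / 3`. Hölder continuity moves `f` by at most `M_n a^α ≤ ε / 3` over one cell, so consecutive
net points are within `ε` of each other: they form an `ε`-chain in `S`, and there are at most
`card S · K^n` such chains, since each vertex has at most `K` admissible successors. Joining the
vertices of a chain by constant-speed geodesics gives `f̂`; on a cell, `f(t)` is within `ε / 3`
of `f(k a)`, which is within `ε / 3` of the vertex, which is within `ε` of `f̂(t)`.
-/

open Set

def relChains {α : Type*} (S : Finset α) (r : α → α → Prop) [DecidableRel r] (m : ℕ) :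
    Finset (Fin (m + 1) → α) :=
  (Fintype.piFinset fun _ => S).filter fun w => ∀ i : Fin m, r (w i.castSucc) (w i.succ)

section relChains

variable {α : Type*} {S : Finset α} {r : α → α → Prop} [DecidableRel r] {m : ℕ}

theorem mem_relChains {w : Fin (m + 1) → α} :
    w ∈ relChains S r m ↔ (∀ i, w i ∈ S) ∧ ∀ i : Fin m, r (w i.castSucc) (w i.succ) := by
  simp [relChains]

theorem relChains_succ_subset [DecidableEq α] :
    relChains S r (m + 1) ⊆ (relChains S r m).biUnion fun u =>
      (S.filter (r (u (Fin.last m)))).image (Fin.snoc (α := fun _ => α) u) := by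
  intro w hw
  obtain ⟨hwS, hwr⟩ := mem_relChains.1 hw
  refine Finset.mem_biUnion.2 ⟨Fin.init w, mem_relChains.2 ⟨fun i => hwS _, fun i => ?_⟩, ?_⟩
  · simpa [Fin.init, ← Fin.succ_castSucc] using hwr i.castSucc
  · refine Finset.mem_image.2 ⟨w (Fin.last (m + 1)), ?_, Fin.snoc_init_self w⟩
    exact Finset.mem_filter.2 ⟨hwS _, hwr (Fin.last m)⟩

theorem card_relChains_le {K : ℕ} (hK : ∀ x ∈ S, (S.filter (r x)).card ≤ K) :
    ∀ m, (relChains S r m).card ≤ S.card * K ^ m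
  | 0 =>
    calc (relChains S r 0).card ≤ (Fintype.piFinset fun _ : Fin 1 => S).card :=
          Finset.card_filter_le _ _
      _ = S.card * K ^ 0 := by simp
  | m + 1 => by
    classical
    have hlast : ∀ u ∈ relChains S r m,
        ((S.filter (r (u (Fin.last m)))).image (Fin.snoc (α := fun _ => α) u)).card ≤ K :=
      fun u hu => Finset.card_image_le.trans (hK _ ((mem_relChains.1 hu).1 _))
    calc (relChains S r (m + 1)).card
        ≤ ∑ u ∈ relChains S r m,
            ((S.filter (r (u (Fin.last m)))).image (Fin.snoc (α := fun _ => α) u)).card :=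
          (Finset.card_le_card relChains_succ_subset).trans Finset.card_biUnion_le
      _ ≤ (relChains S r m).card * K := by
          simpa using Finset.sum_le_card_nsmul _ _ _ hlast
      _ ≤ S.card * K ^ (m + 1) := by
          rw [pow_succ, ← mul_assoc]
          gcongr
          exact card_relChains_le hK m

end relChains

/-- The cells `[k a, (k + 1) a)` are half-open except the last one, so `n a` lies in cell
`n - 1`. -/
noncomputable def gridIndex (a : ℝ) (n : ℕ) (t : ℝ) : ℕ := min ⌊t / a⌋₊ (n - 1)

section gridIndex

variable {a : ℝ} {n k : ℕ} {t : ℝ}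

theorem gridIndex_lt (hn : 0 < n) : gridIndex a n t < n := by
  unfold gridIndex; omega

theorem gridIndex_eq_of_lt (ha : 0 < a) (hk : k < n) (ht : (k : ℝ) * a ≤ t)
    (ht' : t < (k + 1) * a) : gridIndex a n t = k := by
  have ht0 : 0 ≤ t / a := div_nonneg ((by positivity : (0 : ℝ) ≤ k * a).trans ht) ha.le
  have : ⌊t / a⌋₊ = k := by
    rw [Nat.floor_eq_iff ht0, le_div_iff₀ ha, div_lt_iff₀ ha]
    exact ⟨ht, ht'⟩
  unfold gridIndex; omega

theorem gridIndex_natCast_mul (ha : 0 < a) (hk : k < n) : gridIndex a n (k * a) = k :=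
  gridIndex_eq_of_lt ha hk le_rfl (by nlinarith)

theorem gridIndex_natCast_mul_self (ha : 0 < a) : gridIndex a n (n * a) = n - 1 := by
  unfold gridIndex
  rw [mul_div_cancel_right₀ _ ha.ne', Nat.floor_natCast]
  omega

theorem mem_Icc_gridIndex (ha : 0 < a) (hn : 0 < n) (ht : t ∈ Icc 0 (n * a)) :
    t ∈ Icc (gridIndex a n t * a) ((gridIndex a n t + 1) * a) := by
  have hfloor : (⌊t / a⌋₊ : ℝ) * a ≤ t :=
    (le_div_iff₀ ha).1 (Nat.floor_le (div_nonneg ht.1 ha.le))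
  have hfloor' : t < (⌊t / a⌋₊ + 1) * a := (div_lt_iff₀ ha).1 (Nat.lt_floor_add_one _)
  unfold gridIndex
  rcases le_total ⌊t / a⌋₊ (n - 1) with h | h
  · rw [min_eq_left h]; exact ⟨hfloor, hfloor'.le⟩
  · rw [min_eq_right h]
    have hcast : ((n - 1 : ℕ) : ℝ) + 1 = n := by rw [Nat.cast_sub hn, Nat.cast_one]; ring
    have : ((n - 1 : ℕ) : ℝ) ≤ ⌊t / a⌋₊ := by exact_mod_cast h
    exact ⟨by nlinarith, by rw [hcast]; exact ht.2⟩

end gridIndex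

def IsConstSpeedGeodesic {M : Type*} [PseudoMetricSpace M] (x y : M) (γ : ℝ → M) : Prop :=
  γ 0 = x ∧ γ 1 = y ∧
    ∀ s ∈ Icc (0 : ℝ) 1, ∀ t ∈ Icc (0 : ℝ) 1, dist (γ s) (γ t) = |s - t| * dist x y

noncomputable def piecewiseGeodesic {M : Type*} (G : M → M → ℝ → M) (a : ℝ) (n : ℕ)
    (v : ℕ → M) (t : ℝ) : M :=
  G (v (gridIndex a n t)) (v (gridIndex a n t + 1)) ((t - gridIndex a n t * a) / a)

section piecewiseGeodesic

variable {M : Type*} [PseudoMetricSpace M] {G : M → M → ℝ → M}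
  {a : ℝ} {n k : ℕ} {v : ℕ → M} {s t : ℝ}

theorem piecewiseGeodesic_eq (hG : ∀ x y, IsConstSpeedGeodesic x y (G x y)) (ha : 0 < a)
    (hk : k < n) (hs : s ∈ Icc ((k : ℝ) * a) ((k + 1) * a)) :
    piecewiseGeodesic G a n v s = G (v k) (v (k + 1)) ((s - k * a) / a) := by
  rcases hs.2.lt_or_eq with hlt | rfl
  · rw [piecewiseGeodesic, gridIndex_eq_of_lt ha hk hs.1 hlt]
  -- at the right endpoint, `s` may be indexed by cell `k + 1`, whose geodesic starts at `v (k + 1)`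
  have hcell : ((k + 1 : ℝ) * a - k * a) / a = 1 := by field_simp; ring
  rcases (Nat.succ_le_of_lt hk).lt_or_eq with hk1 | hk1
  · have hidx : gridIndex a n ((k + 1 : ℝ) * a) = k + 1 := by
      exact_mod_cast gridIndex_natCast_mul ha hk1
    rw [piecewiseGeodesic, hidx, hcell, (hG _ _).2.1, Nat.cast_add_one, sub_self, zero_div,
      (hG _ _).1]
  · have hidx : gridIndex a n ((k + 1 : ℝ) * a) = k := by
      rw [← hk1, ← Nat.cast_add_one, gridIndex_natCast_mul_self ha, Nat.succ_sub_one]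
    rw [piecewiseGeodesic, hidx]

theorem piecewiseGeodesic_natCast_mul (hG : ∀ x y, IsConstSpeedGeodesic x y (G x y))
    (ha : 0 < a) (hn : 0 < n) (hk : k ≤ n) : piecewiseGeodesic G a n v (k * a) = v k := by
  rcases hk.lt_or_eq with hk | rfl
  · rw [piecewiseGeodesic_eq hG ha hk ⟨le_rfl, by nlinarith⟩, sub_self, zero_div, (hG _ _).1]
  · obtain ⟨j, rfl⟩ := Nat.exists_eq_add_one_of_ne_zero hn.ne'
    push_cast
    rw [piecewiseGeodesic_eq hG ha (Nat.lt_succ_self j) ⟨by nlinarith, le_rfl⟩]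
    rw [show ((j + 1 : ℝ) * a - j * a) / a = 1 by field_simp; ring, (hG _ _).2.1]

theorem dist_piecewiseGeodesic (hG : ∀ x y, IsConstSpeedGeodesic x y (G x y)) (ha : 0 < a)
    (hk : k < n) (hs : s ∈ Icc ((k : ℝ) * a) ((k + 1) * a))
    (ht : t ∈ Icc ((k : ℝ) * a) ((k + 1) * a)) :
    dist (piecewiseGeodesic G a n v s) (piecewiseGeodesic G a n v t) =
      |s - t| / a * dist (v k) (v (k + 1)) := by
  have hunit : ∀ u ∈ Icc ((k : ℝ) * a) ((k + 1) * a), (u - k * a) / a ∈ Icc (0 : ℝ) 1 :=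
    fun u hu => ⟨div_nonneg (by linarith [hu.1]) ha.le, (div_le_one ha).2 (by linarith [hu.2])⟩
  rw [piecewiseGeodesic_eq hG ha hk hs, piecewiseGeodesic_eq hG ha hk ht,
    (hG _ _).2.2 _ (hunit s hs) _ (hunit t ht), ← sub_div, sub_sub_sub_cancel_right, abs_div,
    abs_of_pos ha]

theorem piecewiseGeodesic_natCast_add_one_mul (hG : ∀ x y, IsConstSpeedGeodesic x y (G x y))
    (ha : 0 < a) (hk : k < n) : piecewiseGeodesic G a n v ((k + 1) * a) = v (k + 1) := by
  exact_mod_cast piecewiseGeodesic_natCast_mul hG ha (k.zero_lt_succ.trans_le hk) hk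

theorem dist_piecewiseGeodesic_eq_mul_dist_grid (hG : ∀ x y, IsConstSpeedGeodesic x y (G x y))
    (ha : 0 < a) (hk : k < n) (hs : s ∈ Icc ((k : ℝ) * a) ((k + 1) * a))
    (ht : t ∈ Icc ((k : ℝ) * a) ((k + 1) * a)) :
    dist (piecewiseGeodesic G a n v s) (piecewiseGeodesic G a n v t) =
      |s - t| / a * dist (piecewiseGeodesic G a n v (k * a))
        (piecewiseGeodesic G a n v ((k + 1) * a)) := by
  rw [piecewiseGeodesic_natCast_mul hG ha (k.zero_lt_succ.trans_le hk) hk.le,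
    piecewiseGeodesic_natCast_add_one_mul hG ha hk, dist_piecewiseGeodesic hG ha hk hs ht]

theorem dist_vertex_piecewiseGeodesic_le (hG : ∀ x y, IsConstSpeedGeodesic x y (G x y))
    (ha : 0 < a) (hn : 0 < n) (hk : k < n) (ht : t ∈ Icc ((k : ℝ) * a) ((k + 1) * a)) :
    dist (v k) (piecewiseGeodesic G a n v t) ≤ dist (v k) (v (k + 1)) := by
  have hstart : (k : ℝ) * a ∈ Icc ((k : ℝ) * a) ((k + 1) * a) := ⟨le_rfl, by nlinarith⟩
  have hratio : |k * a - t| / a ≤ 1 := by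
    rw [div_le_one ha, abs_sub_comm, abs_of_nonneg (by linarith [ht.1])]; linarith [ht.2]
  calc dist (v k) (piecewiseGeodesic G a n v t)
      = |k * a - t| / a * dist (v k) (v (k + 1)) := by
        rw [← dist_piecewiseGeodesic hG ha hk hstart ht,
          piecewiseGeodesic_natCast_mul hG ha hn hk.le]
    _ ≤ dist (v k) (v (k + 1)) := mul_le_of_le_one_left dist_nonneg hratio

end piecewiseGeodesic

theorem dist_piecewiseGeodesic_le {M : Type*} [PseudoMetricSpace M] {G : M → M → ℝ → M}
    (hG : ∀ x y, IsConstSpeedGeodesic x y (G x y)) {a : ℝ} (ha : 0 < a) {n : ℕ} (hn : 0 < n)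
    {v : ℕ → M} {f : ℝ → M} {δ ε η : ℝ}
    (hf : ∀ k < n, ∀ t ∈ Icc ((k : ℝ) * a) ((k + 1) * a), dist (f t) (f (k * a)) ≤ η)
    (hfv : ∀ k ≤ n, dist (f (k * a)) (v k) ≤ δ) (hv : ∀ k < n, dist (v k) (v (k + 1)) ≤ ε)
    {t : ℝ} (ht : t ∈ Icc 0 (n * a)) :
    dist (f t) (piecewiseGeodesic G a n v t) ≤ η + δ + ε := by
  set k := gridIndex a n t
  have hk : k < n := gridIndex_lt hn
  have htk := mem_Icc_gridIndex ha hn ht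
  calc dist (f t) (piecewiseGeodesic G a n v t)
      ≤ dist (f t) (f (k * a)) + dist (f (k * a)) (v k)
          + dist (v k) (piecewiseGeodesic G a n v t) := dist_triangle4 _ _ _ _
    _ ≤ η + δ + ε := by
      gcongr
      · exact hf k hk t htk
      · exact hfv k hk.le
      · exact (dist_vertex_piecewiseGeodesic_le hG ha hn hk htk).trans (hv k hk)

def chainVertex {α : Type*} {m : ℕ} (w : Fin (m + 1) → α) (k : ℕ) : α :=
  w ⟨min k m, Nat.lt_succ_of_le (min_le_right k m)⟩

section chainVertex

variable {α : Type*} {m k : ℕ} {w : Fin (m + 1) → α}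

theorem chainVertex_of_le (hk : k ≤ m) : chainVertex w k = w ⟨k, Nat.lt_succ_of_le hk⟩ := by
  simp only [chainVertex, min_eq_left hk]

theorem mem_relChains_iff_chainVertex {S : Finset α} {r : α → α → Prop} [DecidableRel r] :
    w ∈ relChains S r m ↔
      (∀ k ≤ m, chainVertex w k ∈ S) ∧ ∀ k < m, r (chainVertex w k) (chainVertex w (k + 1)) := by
  rw [mem_relChains]
  refine and_congr ⟨fun h k hk => h _, fun h ⟨i, hi⟩ => ?_⟩ ⟨fun h k hk => ?_, fun h ⟨i, hi⟩ => ?_⟩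
  · simpa [chainVertex_of_le (Nat.le_of_lt_succ hi)] using h i (Nat.le_of_lt_succ hi)
  · simpa [chainVertex_of_le hk.le, chainVertex_of_le (Nat.succ_le_of_lt hk)] using h ⟨k, hk⟩
  · simpa [chainVertex_of_le hi.le, chainVertex_of_le (Nat.succ_le_of_lt hi)] using h i hi

end chainVertex

theorem mem_relChains_of_dist_le {M : Type*} [PseudoMetricSpace M] {S : Finset M} {p : M → M}
    {f : ℝ → M} {a δ η ε : ℝ} {n : ℕ} (hpS : ∀ x, p x ∈ S) (hp : ∀ x, dist x (p x) ≤ δ)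
    (hf : ∀ k < n, dist (f (k * a)) (f ((k + 1) * a)) ≤ η) (hε : δ + η + δ ≤ ε) :
    (fun i : Fin (n + 1) => p (f (i * a))) ∈ relChains S (fun x y => dist x y ≤ ε) n := by
  refine mem_relChains_iff_chainVertex.2 ⟨fun k _ => hpS _, fun k hk => ?_⟩
  rw [chainVertex_of_le hk.le, chainVertex_of_le (Nat.succ_le_of_lt hk)]
  calc dist (p (f (k * a))) (p (f ((k + 1 : ℕ) * a)))
      ≤ dist (p (f (k * a))) (f (k * a)) + dist (f (k * a)) (f ((k + 1 : ℕ) * a))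
        + dist (f ((k + 1 : ℕ) * a)) (p (f ((k + 1 : ℕ) * a))) := dist_triangle4 _ _ _ _
    _ ≤ δ + η + δ := by
      gcongr
      · exact dist_comm (f _) _ ▸ hp _
      · exact_mod_cast hf k hk
      · exact hp _
    _ ≤ ε := hε

theorem dist_le_of_holder {M : Type*} [PseudoMetricSpace M] {f : ℝ → M} {C α : ℝ} (hC : 0 ≤ C)
    (hα : 0 ≤ α)
    (hf : ∀ t₁ ∈ Icc (0 : ℝ) 1, ∀ t₂ ∈ Icc (0 : ℝ) 1, dist (f t₁) (f t₂) ≤ C * |t₁ - t₂| ^ α)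
    {a s t : ℝ} (hs : s ∈ Icc (0 : ℝ) 1) (ht : t ∈ Icc (0 : ℝ) 1) (hst : |s - t| ≤ a) :
    dist (f s) (f t) ≤ C * a ^ α :=
  (hf s hs t ht).trans (by gcongr)

theorem stmt_8_general
    {M : Type*} [MetricSpace M]
    (hgeo : ∀ x y : M, ∃ γ : ℝ → M, γ 0 = x ∧ γ 1 = y ∧
      ∀ s ∈ Icc (0 : ℝ) 1, ∀ t ∈ Icc (0 : ℝ) 1,
        dist (γ s) (γ t) = |s - t| * dist x y)
    (α : ℝ) (hα0 : 0 < α)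
    (ε M_n : ℝ) (hM : 0 < M_n)
    (n : ℕ) (hn : 0 < n) (a : ℝ) (ha : a = 1 / (n : ℝ))
    (haM : M_n * a ^ α ≤ ε / 3)
    (S : Finset M) (hS : ∀ x : M, ∃ s ∈ S, dist x s ≤ ε / 3)
    (K : ℕ)
    (hKnb : ∀ x ∈ S, ({y : M | y ∈ S ∧ dist x y ≤ ε}).ncard ≤ K) :
    ∃ F : Set (ℝ → M), F.Finite ∧ F.ncard ≤ S.card * K ^ n ∧
      (∀ g ∈ F,
        (∀ k : ℕ, k ≤ n → g ((k : ℝ) * a) ∈ S) ∧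
        (∀ k : ℕ, k < n →
          ∀ s ∈ Icc ((k : ℝ) * a) (((k : ℝ) + 1) * a),
          ∀ t ∈ Icc ((k : ℝ) * a) (((k : ℝ) + 1) * a),
            dist (g s) (g t)
              = (|s - t| / a) * dist (g ((k : ℝ) * a)) (g (((k : ℝ) + 1) * a))) ∧
        (∀ k : ℕ, k < n →
          dist (g ((k : ℝ) * a)) (g (((k : ℝ) + 1) * a)) ≤ ε)) ∧
      ∀ f : ℝ → M,
        (∀ t₁ ∈ Icc (0 : ℝ) 1, ∀ t₂ ∈ Icc (0 : ℝ) 1,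
          dist (f t₁) (f t₂) ≤ M_n * |t₁ - t₂| ^ α) →
        ∃ g ∈ F, ∀ t ∈ Icc (0 : ℝ) 1, dist (f t) (g t) ≤ 5 * ε / 3 := by
  choose G hG using hgeo
  choose p hpS hp using hS
  have ha0 : 0 < a := by rw [ha]; positivity
  have hna : (n : ℝ) * a = 1 := by rw [ha]; field_simp
  have hcell : ∀ k < n, Icc ((k : ℝ) * a) ((k + 1) * a) ⊆ Icc 0 1 := fun k hk =>
    Icc_subset_Icc (by positivity)
      (by have : (k : ℝ) + 1 ≤ n := by exact_mod_cast hk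
          nlinarith)
  classical
  set F := (relChains S (fun x y => dist x y ≤ ε) n).image
    fun w => piecewiseGeodesic G a n (chainVertex w)
  refine ⟨F, F.finite_toSet, ?_, ?_, ?_⟩
  · rw [Set.ncard_coe_finset]
    refine Finset.card_image_le.trans (card_relChains_le (fun x hx => ?_) n)
    rw [← Set.ncard_coe_finset, Finset.coe_filter]
    exact hKnb x hx
  · rintro _ hg
    obtain ⟨w, hw, rfl⟩ := Finset.mem_image.1 hg
    obtain ⟨hwS, hwε⟩ := mem_relChains_iff_chainVertex.1 hw
    refine ⟨fun k hk => ?_, fun k hk s hs t ht =>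
      dist_piecewiseGeodesic_eq_mul_dist_grid hG ha0 hk hs ht, fun k hk => ?_⟩
    · rw [piecewiseGeodesic_natCast_mul hG ha0 hn hk]
      exact hwS k hk
    · rw [piecewiseGeodesic_natCast_mul hG ha0 hn hk.le,
        piecewiseGeodesic_natCast_add_one_mul hG ha0 hk]
      exact hwε k hk
  · intro f hf
    have hmod : ∀ k < n, ∀ t ∈ Icc ((k : ℝ) * a) ((k + 1) * a), dist (f t) (f (k * a)) ≤ ε / 3 :=
      fun k hk t ht =>
        have hstart : (k : ℝ) * a ∈ Icc ((k : ℝ) * a) ((k + 1) * a) := ⟨le_rfl, by nlinarith⟩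
        have hlen : |t - k * a| ≤ a :=
          (Real.dist_eq t _ ▸ Real.dist_le_of_mem_Icc ht hstart).trans_eq (by ring)
        (dist_le_of_holder hM.le hα0.le hf (hcell k hk ht) (hcell k hk hstart) hlen).trans haM
    have hw := mem_relChains_of_dist_le (n := n) (ε := ε) hpS hp
      (fun k hk => dist_comm (f _) _ ▸ hmod k hk _ ⟨by nlinarith, le_rfl⟩) (by linarith)
    refine ⟨_, Finset.mem_image_of_mem _ hw, fun t ht => ?_⟩
    have hfv : ∀ k ≤ n, dist (f (k * a)) (chainVertex (fun i : Fin (n + 1) => p (f (i * a))) k)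
        ≤ ε / 3 := fun k hk => by rw [chainVertex_of_le hk]; exact hp _
    calc _ ≤ ε / 3 + ε / 3 + ε := dist_piecewiseGeodesic_le hG ha0 hn hmod hfv
          (mem_relChains_iff_chainVertex.1 hw).2 (hna ▸ ht)
      _ = 5 * ε / 3 := by ring

/-- Covering of the α-Hölder ball by piecewise geodesic functions with vertices in a
net `S`: there are at most `card S · K^{1/a}` piecewise geodesics approximating every
`(M_n, α)`-Hölder function within `5ε/3` in the supremum distance. -/
theorem stmt_8
    {M : Type*} [MetricSpace M]
    (hgeo : ∀ x y : M, ∃ γ : ℝ → M, γ 0 = x ∧ γ 1 = y ∧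
      ∀ s ∈ Icc (0 : ℝ) 1, ∀ t ∈ Icc (0 : ℝ) 1,
        dist (γ s) (γ t) = |s - t| * dist x y)
    (α : ℝ) (hα0 : 0 < α) (hα1 : α ≤ 1)
    (ε M_n : ℝ) (hε : 0 < ε) (hM : 0 < M_n)
    (n : ℕ) (hn : 0 < n) (a : ℝ) (ha : a = 1 / (n : ℝ))
    (haM : M_n * a ^ α ≤ ε / 3)
    (S : Finset M) (hS : ∀ x : M, ∃ s ∈ S, dist x s ≤ ε / 3)
    (K : ℕ) (hK : 0 < K)
    (hKnb : ∀ x ∈ S, ({y : M | y ∈ S ∧ dist x y ≤ ε}).ncard ≤ K) :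
    ∃ F : Set (ℝ → M), F.Finite ∧ F.ncard ≤ S.card * K ^ n ∧
      (∀ g ∈ F,
        (∀ k : ℕ, k ≤ n → g ((k : ℝ) * a) ∈ S) ∧
        (∀ k : ℕ, k < n →
          ∀ s ∈ Icc ((k : ℝ) * a) (((k : ℝ) + 1) * a),
          ∀ t ∈ Icc ((k : ℝ) * a) (((k : ℝ) + 1) * a),
            dist (g s) (g t)
              = (|s - t| / a) * dist (g ((k : ℝ) * a)) (g (((k : ℝ) + 1) * a))) ∧
        (∀ k : ℕ, k < n →
          dist (g ((k : ℝ) * a)) (g (((k : ℝ) + 1) * a)) ≤ ε)) ∧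
      ∀ f : ℝ → M,
        (∀ t₁ ∈ Icc (0 : ℝ) 1, ∀ t₂ ∈ Icc (0 : ℝ) 1,
          dist (f t₁) (f t₂) ≤ M_n * |t₁ - t₂| ^ α) →
        ∃ g ∈ F, ∀ t ∈ Icc (0 : ℝ) 1, dist (f t) (g t) ≤ 5 * ε / 3 :=
  stmt_8_general hgeo α hα0 ε M_n hM n hn a ha haM S hS K hKnb
end

section
/- Let (M,d) be a metric space, let α ∈ (0,1], let M_n > 0, and let b ∈ (0,1] be such that 1/b is a positive integer. Let f : [0,1] → M be such that (i) for each integer 0 ≤ k < 1/b, the restriction of f to [kb,(k+1)b] is a constant-speed geodesic, i.e. d(f(s),f(t)) = (|s−t|/b)·d(f(kb),f((k+1)b)) for all s,t ∈ [kb,(k+1)b]; and (ii) d(f(k₁b),f(k₂b)) ≤ (M_n/3)·((k₂−k₁)·b)^α for all integers 0 ≤ k₁ < k₂ ≤ 1/b. Then d(f(t₁),f(t₂)) ≤ M_n·|t₂−t₁|^α for all t₁,t₂ ∈ [0,1]. -/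
open Set

set_option maxHeartbeats 1000000 in
private theorem stmt_9_aux
    {M : Type*} [MetricSpace M]
    (α : ℝ) (hα0 : 0 < α) (hα1 : α ≤ 1)
    (M_n : ℝ) (hM : 0 < M_n)
    (n : ℕ) (hn : 0 < n) (b : ℝ) (hb : b = 1 / (n : ℝ))
    (f : ℝ → M)
    (hgeod : ∀ k : ℕ, k < n →
      ∀ s ∈ Icc ((k : ℝ) * b) (((k : ℝ) + 1) * b),
      ∀ t ∈ Icc ((k : ℝ) * b) (((k : ℝ) + 1) * b),
        dist (f s) (f t)
          = (|s - t| / b) * dist (f ((k : ℝ) * b)) (f (((k : ℝ) + 1) * b)))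
    (hgrid : ∀ k₁ k₂ : ℕ, k₁ < k₂ → k₂ ≤ n →
      dist (f ((k₁ : ℝ) * b)) (f ((k₂ : ℝ) * b))
        ≤ (M_n / 3) * (((k₂ : ℝ) - (k₁ : ℝ)) * b) ^ α) :
    ∀ t₁ ∈ Icc (0 : ℝ) 1, ∀ t₂ ∈ Icc (0 : ℝ) 1, t₁ ≤ t₂ →
      dist (f t₁) (f t₂) ≤ M_n * |t₂ - t₁| ^ α := by
  have hn0 : (0:ℝ) < n := by exact_mod_cast hn
  have hb0 : 0 < b := by rw [hb]; positivity
  have hnb : (n : ℝ) * b = 1 := by rw [hb]; field_simp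
  -- segment Hölder bound
  have hseg : ∀ k : ℕ, k < n → ∀ s ∈ Icc ((k : ℝ) * b) (((k : ℝ) + 1) * b),
      ∀ t ∈ Icc ((k : ℝ) * b) (((k : ℝ) + 1) * b),
      dist (f s) (f t) ≤ (M_n / 3) * |s - t| ^ α := by
    intro k hk s hs t ht
    have hD : dist (f ((k : ℝ) * b)) (f (((k:ℝ)+1) * b)) ≤ (M_n / 3) * b ^ α := by
      have h := hgrid k (k+1) (Nat.lt_succ_self k) hk
      push_cast at h
      simpa using h
    rcases eq_or_ne s t with rfl | hst
    · have : (0:ℝ) ≤ (M_n / 3) * |s - s| ^ α := by positivity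
      simpa using this
    · have hx0 : 0 < |s - t| := abs_pos.2 (sub_ne_zero.2 hst)
      have hxb : |s - t| ≤ b := by
        rw [abs_le]
        constructor <;> [nlinarith [hs.1, hs.2, ht.1, ht.2]; nlinarith [hs.1, hs.2, ht.1, ht.2]]
      have hxd0 : 0 < |s - t| / b := div_pos hx0 hb0
      have hxd1 : |s - t| / b ≤ 1 := (div_le_one hb0).2 hxb
      have hx_le : |s - t| / b ≤ (|s - t| / b) ^ α := by
        have := Real.rpow_le_rpow_of_exponent_ge hxd0 hxd1 hα1
        simpa [Real.rpow_one] using this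
      have key : (|s - t| / b) ^ α * b ^ α = |s - t| ^ α := by
        rw [← Real.mul_rpow (by positivity) hb0.le, div_mul_cancel₀ _ hb0.ne']
      calc dist (f s) (f t)
          = (|s - t| / b) * dist (f ((k : ℝ) * b)) (f (((k:ℝ)+1) * b)) :=
            hgeod k hk s hs t ht
        _ ≤ (|s - t| / b) * ((M_n / 3) * b ^ α) :=
            mul_le_mul_of_nonneg_left hD hxd0.le
        _ ≤ (|s - t| / b) ^ α * ((M_n / 3) * b ^ α) := by
            have hbpos : 0 ≤ (M_n / 3) * b ^ α := by positivity
            exact mul_le_mul_of_nonneg_right hx_le hbpos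
        _ = (M_n / 3) * ((|s - t| / b) ^ α * b ^ α) := by ring
        _ = (M_n / 3) * |s - t| ^ α := by rw [key]
  intro t₁ ht₁ t₂ ht₂ hle
  set k₁ : ℕ := ⌊t₁ / b⌋₊ with hk₁def
  set k₂ : ℕ := ⌊t₂ / b⌋₊ with hk₂def
  have h1l : (k₁ : ℝ) * b ≤ t₁ := by
    have := Nat.floor_le (div_nonneg ht₁.1 hb0.le)
    calc (k₁:ℝ) * b ≤ (t₁ / b) * b := by nlinarith
      _ = t₁ := by field_simp
  have h1u : t₁ < ((k₁ : ℝ) + 1) * b := by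
    have := Nat.lt_floor_add_one (t₁ / b)
    calc t₁ = (t₁ / b) * b := by field_simp
      _ < ((k₁:ℝ) + 1) * b := by nlinarith
  have h2l : (k₂ : ℝ) * b ≤ t₂ := by
    have := Nat.floor_le (div_nonneg ht₂.1 hb0.le)
    calc (k₂:ℝ) * b ≤ (t₂ / b) * b := by nlinarith
      _ = t₂ := by field_simp
  have h2u : t₂ < ((k₂ : ℝ) + 1) * b := by
    have := Nat.lt_floor_add_one (t₂ / b)
    calc t₂ = (t₂ / b) * b := by field_simp
      _ < ((k₂:ℝ) + 1) * b := by nlinarith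
  have hk2n : k₂ ≤ n := by
    have h2 : t₂ / b ≤ (n:ℝ) := by
      rw [div_le_iff₀ hb0]; nlinarith [ht₂.2]
    calc k₂ ≤ ⌊(n:ℝ)⌋₊ := Nat.floor_le_floor h2
      _ = n := Nat.floor_natCast n
  have hk12 : k₁ ≤ k₂ := Nat.floor_le_floor (by gcongr)
  have habs : |t₂ - t₁| = t₂ - t₁ := abs_of_nonneg (by linarith)
  rcases eq_or_lt_of_le hk12 with heq | hlt
  · -- same interval
    rcases lt_or_ge k₁ n with hk1n | hk1n
    · have hmem₁ : t₁ ∈ Icc ((k₁:ℝ) * b) (((k₁:ℝ)+1) * b) := ⟨h1l, h1u.le⟩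
      have hmem₂ : t₂ ∈ Icc ((k₁:ℝ) * b) (((k₁:ℝ)+1) * b) := by
        constructor
        · linarith
        · rw [heq]; exact h2u.le
      have := hseg k₁ hk1n t₁ hmem₁ t₂ hmem₂
      have habs2 : |t₁ - t₂| = |t₂ - t₁| := abs_sub_comm _ _
      rw [habs2] at this
      have : dist (f t₁) (f t₂) ≤ (M_n / 3) * |t₂ - t₁| ^ α := this
      have hle3 : (M_n / 3) * |t₂ - t₁| ^ α ≤ M_n * |t₂ - t₁| ^ α := by
        have : (0:ℝ) ≤ |t₂ - t₁| ^ α := Real.rpow_nonneg (abs_nonneg _) α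
        nlinarith
      linarith
    · -- k₁ = n, so t₁ = t₂ = 1
      have : (n:ℝ) * b ≤ t₁ := by
        calc (n:ℝ) * b ≤ (k₁:ℝ) * b := by
              have : (n:ℝ) ≤ (k₁:ℝ) := by exact_mod_cast hk1n
              nlinarith
          _ ≤ t₁ := h1l
      have ht1e : t₁ = 1 := le_antisymm ht₁.2 (by linarith [hnb ▸ this])
      have ht2e : t₂ = 1 := le_antisymm ht₂.2 (by linarith)
      rw [ht1e, ht2e]
      have : (0:ℝ) ≤ M_n * |(1:ℝ) - 1| ^ α := by positivity
      simpa using this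
  · -- different intervals: k₁ < k₂
    have hk1n : k₁ < n := lt_of_lt_of_le hlt hk2n
    have hsucc : ((k₁:ℝ) + 1) ≤ (k₂:ℝ) := by exact_mod_cast hlt
    have hk1b_le : ((k₁:ℝ) + 1) * b ≤ (k₂:ℝ) * b := by nlinarith
    have hT : 0 ≤ t₂ - t₁ := by linarith
    have hrle : ∀ x : ℝ, 0 ≤ x → x ≤ t₂ - t₁ → x ^ α ≤ (t₂ - t₁) ^ α :=
      fun x hx hxle => Real.rpow_le_rpow hx hxle hα0.le
    -- three bounds
    have hd1 : dist (f t₁) (f (((k₁:ℝ)+1) * b)) ≤ (M_n / 3) * (t₂ - t₁) ^ α := by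
      have hmem₁ : t₁ ∈ Icc ((k₁:ℝ) * b) (((k₁:ℝ)+1) * b) := ⟨h1l, h1u.le⟩
      have hmem₂ : ((k₁:ℝ)+1) * b ∈ Icc ((k₁:ℝ) * b) (((k₁:ℝ)+1) * b) :=
        ⟨by nlinarith, le_refl _⟩
      have h := hseg k₁ hk1n t₁ hmem₁ _ hmem₂
      have habs' : |t₁ - ((k₁:ℝ)+1) * b| = ((k₁:ℝ)+1) * b - t₁ := by
        rw [abs_sub_comm]; exact abs_of_nonneg (by linarith)
      rw [habs'] at h
      refine h.trans ?_
      exact mul_le_mul_of_nonneg_left (hrle _ (by linarith) (by linarith)) (by positivity)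
    have hd2 : dist (f (((k₁:ℝ)+1) * b)) (f ((k₂:ℝ) * b)) ≤ (M_n / 3) * (t₂ - t₁) ^ α := by
      rcases eq_or_lt_of_le (Nat.succ_le_of_lt hlt) with heq' | hlt'
      · have : ((k₁:ℝ)+1) = (k₂:ℝ) := by exact_mod_cast heq'
        rw [this]
        have : (0:ℝ) ≤ (M_n / 3) * (t₂ - t₁) ^ α := by positivity
        simpa using this
      · have h := hgrid (k₁+1) k₂ hlt' hk2n
        push_cast at h
        refine h.trans ?_
        have hx0 : (0:ℝ) ≤ ((k₂:ℝ) - ((k₁:ℝ) + 1)) * b := by nlinarith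
        have hxle : ((k₂:ℝ) - ((k₁:ℝ) + 1)) * b ≤ t₂ - t₁ := by nlinarith
        exact mul_le_mul_of_nonneg_left (hrle _ hx0 hxle) (by positivity)
    have hd3 : dist (f ((k₂:ℝ) * b)) (f t₂) ≤ (M_n / 3) * (t₂ - t₁) ^ α := by
      rcases lt_or_ge k₂ n with hk2n' | hk2n'
      · have hmem₁ : (k₂:ℝ) * b ∈ Icc ((k₂:ℝ) * b) (((k₂:ℝ)+1) * b) :=
          ⟨le_refl _, by nlinarith⟩
        have hmem₂ : t₂ ∈ Icc ((k₂:ℝ) * b) (((k₂:ℝ)+1) * b) := ⟨h2l, h2u.le⟩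
        have h := hseg k₂ hk2n' _ hmem₁ t₂ hmem₂
        have habs' : |(k₂:ℝ) * b - t₂| = t₂ - (k₂:ℝ) * b := by
          rw [abs_sub_comm]; exact abs_of_nonneg (by linarith)
        rw [habs'] at h
        refine h.trans ?_
        exact mul_le_mul_of_nonneg_left (hrle _ (by linarith) (by linarith)) (by positivity)
      · have hke : k₂ = n := le_antisymm hk2n hk2n'
        have ht2e : t₂ = (k₂:ℝ) * b := by
          have : (k₂:ℝ) * b = 1 := by rw [hke]; exact hnb
          linarith [ht₂.2, h2l]
        rw [← ht2e]
        have : (0:ℝ) ≤ (M_n / 3) * (t₂ - t₁) ^ α := by positivity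
        simpa using this
    have htri := dist_triangle4 (f t₁) (f (((k₁:ℝ)+1) * b)) (f ((k₂:ℝ) * b)) (f t₂)
    rw [habs]
    linarith

/-- A piecewise geodesic function on the regular grid of spacing `b` whose values at
grid points satisfy an α-Hölder bound with constant `M_n/3` is globally α-Hölder with
constant `M_n`. -/
theorem stmt_9
    {M : Type*} [MetricSpace M]
    (α : ℝ) (hα0 : 0 < α) (hα1 : α ≤ 1)
    (M_n : ℝ) (hM : 0 < M_n)
    (n : ℕ) (hn : 0 < n) (b : ℝ) (hb : b = 1 / (n : ℝ))
    (f : ℝ → M)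
    (hgeod : ∀ k : ℕ, k < n →
      ∀ s ∈ Icc ((k : ℝ) * b) (((k : ℝ) + 1) * b),
      ∀ t ∈ Icc ((k : ℝ) * b) (((k : ℝ) + 1) * b),
        dist (f s) (f t)
          = (|s - t| / b) * dist (f ((k : ℝ) * b)) (f (((k : ℝ) + 1) * b)))
    (hgrid : ∀ k₁ k₂ : ℕ, k₁ < k₂ → k₂ ≤ n →
      dist (f ((k₁ : ℝ) * b)) (f ((k₂ : ℝ) * b))
        ≤ (M_n / 3) * (((k₂ : ℝ) - (k₁ : ℝ)) * b) ^ α) :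
    ∀ t₁ ∈ Icc (0 : ℝ) 1, ∀ t₂ ∈ Icc (0 : ℝ) 1,
      dist (f t₁) (f t₂) ≤ M_n * |t₂ - t₁| ^ α := by
  intro t₁ ht₁ t₂ ht₂
  rcases le_total t₁ t₂ with hle | hle
  · exact stmt_9_aux α hα0 hα1 M_n hM n hn b hb f hgeod hgrid t₁ ht₁ t₂ ht₂ hle
  · rw [dist_comm, abs_sub_comm]
    exact stmt_9_aux α hα0 hα1 M_n hM n hn b hb f hgeod hgrid t₂ ht₂ t₁ ht₁ hle
end

section
/- Let (M,d) be a metric space, let b ∈ (0,1] be such that 1/b is a positive integer, and let L, r > 0. Let f₀ : [0,1] → M be L-Lipschitz, and let f : [0,1] → M be such that (i) for each integer 0 ≤ k < 1/b, the restriction of f to [kb,(k+1)b] is a constant-speed geodesic, i.e. d(f(s),f(t)) = (|s−t|/b)·d(f(kb),f((k+1)b)) for all s,t ∈ [kb,(k+1)b]; and (ii) d(f(kb),f₀(kb)) ≤ r for every integer 0 ≤ k ≤ 1/b. Then sup_{t∈[0,1]} d(f₀(t),f(t)) ≤ 3r + 2Lb. -/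
open Set

/-- Approximation of an `L`-Lipschitz path by a piecewise geodesic whose grid values
are within `r` of the true values: the supremum distance is at most `3r + 2Lb`. -/
theorem stmt_10
    {M : Type*} [MetricSpace M]
    (n : ℕ) (hn : 0 < n) (b : ℝ) (hb : b = 1 / (n : ℝ))
    (L r : ℝ) (hL : 0 < L) (hr : 0 < r)
    (f₀ f : ℝ → M)
    (hf₀ : ∀ s ∈ Icc (0 : ℝ) 1, ∀ t ∈ Icc (0 : ℝ) 1,
      dist (f₀ s) (f₀ t) ≤ L * |s - t|)
    (hgeod : ∀ k : ℕ, k < n →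
      ∀ s ∈ Icc ((k : ℝ) * b) (((k : ℝ) + 1) * b),
      ∀ t ∈ Icc ((k : ℝ) * b) (((k : ℝ) + 1) * b),
        dist (f s) (f t)
          = (|s - t| / b) * dist (f ((k : ℝ) * b)) (f (((k : ℝ) + 1) * b)))
    (hgrid : ∀ k : ℕ, k ≤ n → dist (f ((k : ℝ) * b)) (f₀ ((k : ℝ) * b)) ≤ r) :
    ∀ t ∈ Icc (0 : ℝ) 1, dist (f₀ t) (f t) ≤ 3 * r + 2 * L * b := by
  intro t ht
  have hnR : (0 : ℝ) < n := by exact_mod_cast hn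
  have hbpos : 0 < b := by rw [hb]; positivity
  have hnb : (n : ℝ) * b = 1 := by rw [hb]; field_simp
  obtain ⟨ht0, ht1⟩ := ht
  set k : ℕ := min ⌊t * n⌋₊ (n - 1) with hk
  have hkn : k < n := lt_of_le_of_lt (min_le_right _ _) (Nat.sub_lt hn one_pos)
  have hkR : (k : ℝ) ≤ t * n := le_trans (by exact_mod_cast min_le_left _ _)
    (Nat.floor_le (by positivity))
  have hlow : (k : ℝ) * b ≤ t := by
    calc (k : ℝ) * b ≤ t * n * b := by nlinarith
    _ = t := by rw [mul_assoc, hnb, mul_one]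
  have hhigh : t ≤ ((k : ℝ) + 1) * b := by
    rcases le_or_gt ⌊t * n⌋₊ (n - 1) with h | h
    · have hkeq : k = ⌊t * n⌋₊ := by simp [hk, h]
      have : t * n < (k : ℝ) + 1 := by
        rw [hkeq]; exact_mod_cast Nat.lt_floor_add_one (t * n)
      nlinarith
    · have hkeq : k = n - 1 := by simp [hk, le_of_lt h]
      have : (k : ℝ) + 1 = n := by
        rw [hkeq]; push_cast [Nat.cast_sub hn]; ring
      rw [this, hnb]; exact ht1
  have hkmem : (k : ℝ) * b ∈ Icc ((k : ℝ) * b) (((k : ℝ) + 1) * b) :=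
    ⟨le_refl _, by nlinarith⟩
  have htmem : t ∈ Icc ((k : ℝ) * b) (((k : ℝ) + 1) * b) := ⟨hlow, hhigh⟩
  have hkb01 : (k : ℝ) * b ∈ Icc (0 : ℝ) 1 := ⟨by positivity, by
    have : ((k : ℝ) + 1) * b ≤ n * b := by
      have : (k : ℝ) + 1 ≤ n := by exact_mod_cast hkn
      nlinarith
    nlinarith⟩
  have hk1b01 : ((k : ℝ) + 1) * b ∈ Icc (0 : ℝ) 1 := ⟨by positivity, by
    have : (k : ℝ) + 1 ≤ n := by exact_mod_cast hkn
    nlinarith⟩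
  -- distance from f(kb) to f(t)
  have hgeo := hgeod k hkn ((k : ℝ) * b) hkmem t htmem
  have hratio : |(k : ℝ) * b - t| / b ≤ 1 := by
    rw [abs_sub_comm, abs_of_nonneg (by linarith)]
    rw [div_le_one hbpos]; nlinarith
  have hend : dist (f ((k : ℝ) * b)) (f (((k : ℝ) + 1) * b)) ≤ 2 * r + L * b := by
    calc dist (f ((k : ℝ) * b)) (f (((k : ℝ) + 1) * b))
        ≤ dist (f ((k : ℝ) * b)) (f₀ ((k : ℝ) * b))
          + dist (f₀ ((k : ℝ) * b)) (f₀ (((k : ℝ) + 1) * b))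
          + dist (f₀ (((k : ℝ) + 1) * b)) (f (((k : ℝ) + 1) * b)) :=
          dist_triangle4 _ _ _ _
      _ ≤ r + L * b + r := by
          have h1 := hgrid k (le_of_lt hkn)
          have h2 := hf₀ _ hkb01 _ hk1b01
          have h3 : dist (f₀ (((k : ℝ) + 1) * b)) (f (((k : ℝ) + 1) * b)) ≤ r := by
            rw [dist_comm]
            have := hgrid (k + 1) hkn
            push_cast at this
            exact this
          have habs : |(k : ℝ) * b - ((k : ℝ) + 1) * b| = b := by
            rw [abs_sub_comm]
            rw [abs_of_nonneg (by nlinarith)]; ring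
          rw [habs] at h2
          linarith
      _ = 2 * r + L * b := by ring
  have hstep : dist (f ((k : ℝ) * b)) (f t) ≤ 2 * r + L * b := by
    rw [hgeo]
    have hdn : (0 : ℝ) ≤ dist (f ((k : ℝ) * b)) (f (((k : ℝ) + 1) * b)) := dist_nonneg
    calc |(k : ℝ) * b - t| / b * dist (f ((k : ℝ) * b)) (f (((k : ℝ) + 1) * b))
        ≤ 1 * dist (f ((k : ℝ) * b)) (f (((k : ℝ) + 1) * b)) := by
          exact mul_le_mul_of_nonneg_right hratio hdn
      _ ≤ 2 * r + L * b := by rw [one_mul]; exact hend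
  calc dist (f₀ t) (f t)
      ≤ dist (f₀ t) (f₀ ((k : ℝ) * b)) + dist (f₀ ((k : ℝ) * b)) (f ((k : ℝ) * b))
        + dist (f ((k : ℝ) * b)) (f t) := dist_triangle4 _ _ _ _
    _ ≤ L * b + r + (2 * r + L * b) := by
        have h1 := hf₀ t ⟨ht0, ht1⟩ _ hkb01
        have habs : |t - (k : ℝ) * b| ≤ b := by
          rw [abs_of_nonneg (by linarith)]; nlinarith
        have h1' : dist (f₀ t) (f₀ ((k : ℝ) * b)) ≤ L * b := by
          calc dist (f₀ t) (f₀ ((k : ℝ) * b)) ≤ L * |t - (k : ℝ) * b| := h1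
            _ ≤ L * b := by nlinarith
        have h2 : dist (f₀ ((k : ℝ) * b)) (f ((k : ℝ) * b)) ≤ r := by
          rw [dist_comm]; exact hgrid k (le_of_lt hkn)
        linarith
    _ = 3 * r + 2 * L * b := by ring
end

section
/- Let (Ω, ν) be a measure space with ν(Ω) < ∞, let 0 < c₁ ≤ c₂, and let p₀, p : Ω → ℝ be measurable with c₁ ≤ p₀(ω) ≤ c₂ and c₁ ≤ p(ω) ≤ c₂ for all ω ∈ Ω. Then ∫_Ω p₀(ω)·log(p₀(ω)/p(ω)) dν(ω) ≤ (c₂/c₁) · ∫_Ω |p₀(ω) − p(ω)| dν(ω). -/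
open MeasureTheory

/-- Kullback–Leibler-type bound for two densities bounded above and below:
`∫ p₀ log(p₀/p) dν ≤ (c₂/c₁) ∫ |p₀ − p| dν`. -/
theorem stmt_11
    {Ω : Type*} [MeasurableSpace Ω] (ν : Measure Ω) [IsFiniteMeasure ν]
    (c₁ c₂ : ℝ) (hc₁ : 0 < c₁) (hc₁₂ : c₁ ≤ c₂)
    (p₀ p : Ω → ℝ) (hp₀m : Measurable p₀) (hpm : Measurable p)
    (hp₀l : ∀ ω, c₁ ≤ p₀ ω) (hp₀u : ∀ ω, p₀ ω ≤ c₂)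
    (hpl : ∀ ω, c₁ ≤ p ω) (hpu : ∀ ω, p ω ≤ c₂) :
    ∫ ω, p₀ ω * Real.log (p₀ ω / p ω) ∂ν
      ≤ (c₂ / c₁) * ∫ ω, |p₀ ω - p ω| ∂ν := by
  have hc₂ : (0:ℝ) < c₂ := lt_of_lt_of_le hc₁ hc₁₂
  have key : ∀ ω, p₀ ω * Real.log (p₀ ω / p ω) ≤ (c₂ / c₁) * |p₀ ω - p ω| := by
    intro ω
    have hp0 : 0 < p₀ ω := lt_of_lt_of_le hc₁ (hp₀l ω)
    have hp' : 0 < p ω := lt_of_lt_of_le hc₁ (hpl ω)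
    have hlog : Real.log (p₀ ω / p ω) ≤ p₀ ω / p ω - 1 :=
      Real.log_le_sub_one_of_pos (div_pos hp0 hp')
    have h1 : p₀ ω * Real.log (p₀ ω / p ω) ≤ p₀ ω * (p₀ ω / p ω - 1) :=
      mul_le_mul_of_nonneg_left hlog hp0.le
    have h2 : p₀ ω * (p₀ ω / p ω - 1) = (p₀ ω / p ω) * (p₀ ω - p ω) := by
      field_simp
    have h3 : (p₀ ω / p ω) * (p₀ ω - p ω) ≤ (p₀ ω / p ω) * |p₀ ω - p ω| :=
      mul_le_mul_of_nonneg_left (le_abs_self _) (div_pos hp0 hp').le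
    have h4 : p₀ ω / p ω ≤ c₂ / c₁ :=
      div_le_div₀ (le_of_lt hc₂) (hp₀u ω) hc₁ (hpl ω)
    have h5 : (p₀ ω / p ω) * |p₀ ω - p ω| ≤ (c₂ / c₁) * |p₀ ω - p ω| :=
      mul_le_mul_of_nonneg_right h4 (abs_nonneg _)
    calc p₀ ω * Real.log (p₀ ω / p ω) ≤ (p₀ ω / p ω) * (p₀ ω - p ω) := by rw [← h2]; exact h1
      _ ≤ _ := le_trans h3 h5
  have hmeas1 : Measurable fun ω => p₀ ω * Real.log (p₀ ω / p ω) :=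
    hp₀m.mul ((hp₀m.div hpm).log)
  have hmeas2 : Measurable fun ω => |p₀ ω - p ω| := (hp₀m.sub hpm).abs
  have hint2 : Integrable (fun ω => |p₀ ω - p ω|) ν := by
    apply (integrable_const (2 * c₂)).mono' hmeas2.aestronglyMeasurable
    filter_upwards with ω
    rw [Real.norm_eq_abs, abs_abs]
    have := abs_sub_abs_le_abs_sub (p₀ ω) (p ω)
    have h1 := abs_sub (p₀ ω) (p ω)
    calc |p₀ ω - p ω| ≤ |p₀ ω| + |p ω| := abs_sub _ _
      _ ≤ c₂ + c₂ := by
          gcongr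
          · rw [abs_of_pos (lt_of_lt_of_le hc₁ (hp₀l ω))]; exact hp₀u ω
          · rw [abs_of_pos (lt_of_lt_of_le hc₁ (hpl ω))]; exact hpu ω
      _ = 2 * c₂ := by ring
  have hint1 : Integrable (fun ω => p₀ ω * Real.log (p₀ ω / p ω)) ν := by
    apply (integrable_const (c₂ * max |Real.log (c₂/c₁)| |Real.log (c₁/c₂)|)).mono'
      hmeas1.aestronglyMeasurable
    filter_upwards with ω
    have hp0 : 0 < p₀ ω := lt_of_lt_of_le hc₁ (hp₀l ω)
    have hp' : 0 < p ω := lt_of_lt_of_le hc₁ (hpl ω)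
    rw [Real.norm_eq_abs, abs_mul, abs_of_pos hp0]
    have hub : p₀ ω / p ω ≤ c₂ / c₁ := div_le_div₀ (le_of_lt hc₂) (hp₀u ω) hc₁ (hpl ω)
    have hlb : c₁ / c₂ ≤ p₀ ω / p ω := div_le_div₀ hp0.le (hp₀l ω) hp' (hpu ω)
    have habs : |Real.log (p₀ ω / p ω)| ≤ max |Real.log (c₂/c₁)| |Real.log (c₁/c₂)| := by
      rcases abs_cases (Real.log (p₀ ω / p ω)) with ⟨he, _⟩ | ⟨he, _⟩
      · rw [he]
        refine le_max_of_le_left ((Real.log_le_log (div_pos hp0 hp') hub).trans (le_abs_self _))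
      · rw [he]
        refine le_max_of_le_right ?_
        have := Real.log_le_log (div_pos hc₁ hc₂) hlb
        calc -Real.log (p₀ ω / p ω) ≤ -Real.log (c₁/c₂) := by linarith
          _ ≤ |Real.log (c₁/c₂)| := neg_le_abs _
      done
    exact mul_le_mul (hp₀u ω) habs (abs_nonneg _) hc₂.le
  calc ∫ ω, p₀ ω * Real.log (p₀ ω / p ω) ∂ν
      ≤ ∫ ω, (c₂ / c₁) * |p₀ ω - p ω| ∂ν :=
        integral_mono hint1 (hint2.const_mul _) key
    _ = (c₂ / c₁) * ∫ ω, |p₀ ω - p ω| ∂ν := integral_const_mul _ _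
end

section
/- Let (M,d) be a metric space equipped with a measure μ with μ(M) < ∞, let 0 < c₁ ≤ c₂ and c₃ > 0, and let K : M × M → ℝ be measurable with c₁ ≤ K(x,y) ≤ c₂ for all x,y ∈ M and |K(x₁,y) − K(x₂,y)| ≤ c₃·d(x₁,x₂) for all x₁,x₂,y ∈ M. Let p : [0,1] → [0,∞) be measurable with ∫₀¹ p(t) dt = 1, and let f₀, f : [0,1] → M be measurable and bounded. Then (a) ∫₀¹ ∫_M K(f₀(t),x)·p(t)·log( K(f₀(t),x) / K(f(t),x) ) dμ(x) dt ≤ (c₂·c₃/c₁) · μ(M) · d_∞(f₀,f), and (b) ∫₀¹ ∫_M K(f₀(t),x)·p(t)·( log( K(f₀(t),x) / K(f(t),x) ) )² dμ(x) dt ≤ c₂ · μ(M) · (c₃/c₁)² · d_∞(f₀,f)², where d_∞(f₀,f) = sup_{t∈[0,1]} d(f₀(t),f(t)). -/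
open MeasureTheory Set

lemma log_div_abs_le' {c₁ a b : ℝ} (hc : 0 < c₁) (ha : c₁ ≤ a) (hb : c₁ ≤ b) :
    Real.log a - Real.log b ≤ |a - b| / c₁ := by
  have ha' : 0 < a := hc.trans_le ha
  have hb' : 0 < b := hc.trans_le hb
  have h1 : Real.log a - Real.log b = Real.log (a / b) := (Real.log_div ha'.ne' hb'.ne').symm
  have h2 : Real.log (a / b) ≤ a / b - 1 := Real.log_le_sub_one_of_pos (div_pos ha' hb')
  have h3 : a / b - 1 = (a - b) / b := by field_simp
  have h4 : (a - b) / b ≤ |a - b| / c₁ :=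
    div_le_div₀ (abs_nonneg _) (le_abs_self _) hc hb
  linarith

lemma log_div_abs_le {c₁ a b : ℝ} (hc : 0 < c₁) (ha : c₁ ≤ a) (hb : c₁ ≤ b) :
    |Real.log (a / b)| ≤ |a - b| / c₁ := by
  have ha' : 0 < a := hc.trans_le ha
  have hb' : 0 < b := hc.trans_le hb
  rw [Real.log_div ha'.ne' hb'.ne', abs_sub_le_iff]
  refine ⟨log_div_abs_le' hc ha hb, ?_⟩
  rw [abs_sub_comm]
  exact log_div_abs_le' hc hb ha

/-- Abstract version of the paper's Lemma 2.9: for a kernel `K` bounded between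
positive constants and Lipschitz in its first argument, the Kullback–Leibler
divergence and second log-moment of the induced joint densities are bounded by the
supremum distance `d_∞(f₀,f)` (resp. its square). -/
theorem stmt_12
    {M : Type*} [MetricSpace M] [MeasurableSpace M] (μ : Measure M)
    (hμ : μ Set.univ < ⊤)
    (c₁ c₂ c₃ : ℝ) (hc₁ : 0 < c₁) (hc₁₂ : c₁ ≤ c₂) (hc₃ : 0 < c₃)
    (K : M → M → ℝ) (hKmeas : Measurable (Function.uncurry K))
    (hKl : ∀ x y : M, c₁ ≤ K x y) (hKu : ∀ x y : M, K x y ≤ c₂)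
    (hKLip : ∀ x₁ x₂ y : M, |K x₁ y - K x₂ y| ≤ c₃ * dist x₁ x₂)
    (p : ℝ → ℝ) (hpmeas : Measurable p) (hp0 : ∀ t, 0 ≤ p t)
    (hp1 : ∫ t in Icc (0 : ℝ) 1, p t = 1)
    (f₀ f : ℝ → M) (hf₀ : Measurable f₀) (hf : Measurable f)
    (hb₀ : Bornology.IsBounded (Set.range f₀))
    (hbf : Bornology.IsBounded (Set.range f)) :
    (∫ t in Icc (0 : ℝ) 1,
        (∫ x, K (f₀ t) x * p t * Real.log (K (f₀ t) x / K (f t) x) ∂μ)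
      ≤ (c₂ * c₃ / c₁) * (μ Set.univ).toReal *
          ⨆ t : Icc (0 : ℝ) 1, dist (f₀ t) (f t)) ∧
    (∫ t in Icc (0 : ℝ) 1,
        (∫ x, K (f₀ t) x * p t * (Real.log (K (f₀ t) x / K (f t) x)) ^ 2 ∂μ)
      ≤ c₂ * (μ Set.univ).toReal * (c₃ / c₁) ^ 2 *
          (⨆ t : Icc (0 : ℝ) 1, dist (f₀ t) (f t)) ^ 2) := by
  haveI : IsFiniteMeasure μ := ⟨hμ⟩
  set μR := (μ Set.univ).toReal with hμR
  have hμR0 : 0 ≤ μR := ENNReal.toReal_nonneg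
  set D := ⨆ t : Icc (0 : ℝ) 1, dist (f₀ t) (f t) with hDdef
  -- bounded above
  obtain ⟨C, hC⟩ := Metric.isBounded_iff.mp (hb₀.union hbf)
  have hbdd : BddAbove (Set.range fun t : Icc (0:ℝ) 1 => dist (f₀ t) (f t)) := by
    refine ⟨C, ?_⟩
    rintro _ ⟨t, rfl⟩
    exact hC (Set.mem_union_left _ ⟨t, rfl⟩) (Set.mem_union_right _ ⟨t, rfl⟩)
  have hDle : ∀ t ∈ Icc (0:ℝ) 1, dist (f₀ t) (f t) ≤ D := fun t ht =>
    le_ciSup hbdd (⟨t, ht⟩ : Icc (0:ℝ) 1)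
  have hD0 : 0 ≤ D := dist_nonneg.trans (hDle 0 (by norm_num))
  set L := c₃ / c₁ * D with hLdef
  have hL0 : 0 ≤ L := mul_nonneg (div_nonneg hc₃.le hc₁.le) hD0
  -- log bound
  have hlog : ∀ t ∈ Icc (0:ℝ) 1, ∀ x, |Real.log (K (f₀ t) x / K (f t) x)| ≤ L := by
    intro t ht x
    calc |Real.log (K (f₀ t) x / K (f t) x)| ≤ |K (f₀ t) x - K (f t) x| / c₁ :=
          log_div_abs_le hc₁ (hKl _ _) (hKl _ _)
      _ ≤ c₃ * D / c₁ := by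
          gcongr
          exact (hKLip _ _ _).trans (mul_le_mul_of_nonneg_left (hDle t ht) hc₃.le)
      _ = L := by rw [hLdef]; ring
  -- integrability of p
  have hpint : IntegrableOn p (Icc (0:ℝ) 1) := by
    by_contra h
    rw [integral_undef h] at hp1
    norm_num at hp1
  -- part a
  have hG1meas : StronglyMeasurable fun t : ℝ =>
      ∫ x, K (f₀ t) x * p t * Real.log (K (f₀ t) x / K (f t) x) ∂μ := by
    apply StronglyMeasurable.integral_prod_right'
      (f := fun q : ℝ × M => K (f₀ q.1) q.2 * p q.1 * Real.log (K (f₀ q.1) q.2 / K (f q.1) q.2))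
    have h1 : Measurable fun q : ℝ × M => K (f₀ q.1) q.2 :=
      hKmeas.comp ((hf₀.comp measurable_fst).prodMk measurable_snd)
    have h2 : Measurable fun q : ℝ × M => K (f q.1) q.2 :=
      hKmeas.comp ((hf.comp measurable_fst).prodMk measurable_snd)
    exact ((h1.mul (hpmeas.comp measurable_fst)).mul
      (Real.measurable_log.comp (h1.div h2))).stronglyMeasurable
  have hG2meas : StronglyMeasurable fun t : ℝ =>
      ∫ x, K (f₀ t) x * p t * (Real.log (K (f₀ t) x / K (f t) x)) ^ 2 ∂μ := by
    apply StronglyMeasurable.integral_prod_right'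
      (f := fun q : ℝ × M => K (f₀ q.1) q.2 * p q.1 * (Real.log (K (f₀ q.1) q.2 / K (f q.1) q.2)) ^ 2)
    have h1 : Measurable fun q : ℝ × M => K (f₀ q.1) q.2 :=
      hKmeas.comp ((hf₀.comp measurable_fst).prodMk measurable_snd)
    have h2 : Measurable fun q : ℝ × M => K (f q.1) q.2 :=
      hKmeas.comp ((hf.comp measurable_fst).prodMk measurable_snd)
    exact ((h1.mul (hpmeas.comp measurable_fst)).mul
      ((Real.measurable_log.comp (h1.div h2)).pow_const 2)).stronglyMeasurable
  -- pointwise bounds on the inner integrals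
  have hG1bound : ∀ t ∈ Icc (0:ℝ) 1,
      |∫ x, K (f₀ t) x * p t * Real.log (K (f₀ t) x / K (f t) x) ∂μ| ≤ c₂ * L * μR * p t := by
    intro t ht
    have : ‖∫ x, K (f₀ t) x * p t * Real.log (K (f₀ t) x / K (f t) x) ∂μ‖
        ≤ (c₂ * p t * L) * μR := by
      apply norm_integral_le_of_norm_le_const
      filter_upwards with x
      rw [Real.norm_eq_abs, abs_mul, abs_mul,
        abs_of_nonneg ((hc₁.trans_le (hKl _ _)).le), abs_of_nonneg (hp0 t)]
      have h1 := hlog t ht x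
      have h2 := hKu (f₀ t) x
      have h3 := hp0 t
      have h4 : (0:ℝ) ≤ K (f₀ t) x := (hc₁.trans_le (hKl _ _)).le
      have h5 : K (f₀ t) x * |Real.log (K (f₀ t) x / K (f t) x)| ≤ c₂ * L :=
        mul_le_mul h2 h1 (abs_nonneg _) ((hc₁.trans_le hc₁₂).le)
      calc K (f₀ t) x * p t * |Real.log (K (f₀ t) x / K (f t) x)|
          = K (f₀ t) x * |Real.log (K (f₀ t) x / K (f t) x)| * p t := by ring
        _ ≤ c₂ * L * p t := mul_le_mul_of_nonneg_right h5 h3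
        _ = c₂ * p t * L := by ring
    rw [Real.norm_eq_abs] at this
    calc |_| ≤ (c₂ * p t * L) * μR := this
      _ = c₂ * L * μR * p t := by ring
  have hG2bound : ∀ t ∈ Icc (0:ℝ) 1,
      |∫ x, K (f₀ t) x * p t * (Real.log (K (f₀ t) x / K (f t) x)) ^ 2 ∂μ|
        ≤ c₂ * L ^ 2 * μR * p t := by
    intro t ht
    have : ‖∫ x, K (f₀ t) x * p t * (Real.log (K (f₀ t) x / K (f t) x)) ^ 2 ∂μ‖
        ≤ (c₂ * p t * L ^ 2) * μR := by
      apply norm_integral_le_of_norm_le_const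
      filter_upwards with x
      rw [Real.norm_eq_abs, abs_mul, abs_mul,
        abs_of_nonneg ((hc₁.trans_le (hKl _ _)).le), abs_of_nonneg (hp0 t),
        abs_of_nonneg (sq_nonneg _)]
      have h1 : (Real.log (K (f₀ t) x / K (f t) x)) ^ 2 ≤ L ^ 2 := by
        rw [← sq_abs]
        exact pow_le_pow_left₀ (abs_nonneg _) (hlog t ht x) 2
      have h2 := hKu (f₀ t) x
      have h3 := hp0 t
      have h4 : (0:ℝ) ≤ K (f₀ t) x := (hc₁.trans_le (hKl _ _)).le
      have h5 : K (f₀ t) x * (Real.log (K (f₀ t) x / K (f t) x)) ^ 2 ≤ c₂ * L ^ 2 :=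
        mul_le_mul h2 h1 (sq_nonneg _) ((hc₁.trans_le hc₁₂).le)
      calc K (f₀ t) x * p t * (Real.log (K (f₀ t) x / K (f t) x)) ^ 2
          = K (f₀ t) x * (Real.log (K (f₀ t) x / K (f t) x)) ^ 2 * p t := by ring
        _ ≤ c₂ * L ^ 2 * p t := mul_le_mul_of_nonneg_right h5 h3
        _ = c₂ * p t * L ^ 2 := by ring
    rw [Real.norm_eq_abs] at this
    calc |_| ≤ (c₂ * p t * L ^ 2) * μR := this
      _ = c₂ * L ^ 2 * μR * p t := by ring
  -- generic step
  have main : ∀ (G : ℝ → ℝ) (B : ℝ), 0 ≤ B → StronglyMeasurable G →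
      (∀ t ∈ Icc (0:ℝ) 1, |G t| ≤ B * p t) →
      ∫ t in Icc (0:ℝ) 1, G t ≤ B := by
    intro G B hB hGm hGb
    have hBpint : IntegrableOn (fun t => B * p t) (Icc (0:ℝ) 1) := hpint.const_mul B
    have hGint : IntegrableOn G (Icc (0:ℝ) 1) := by
      apply Integrable.mono' hBpint (hGm.aestronglyMeasurable.restrict)
      filter_upwards [ae_restrict_mem measurableSet_Icc] with t ht
      simpa [Real.norm_eq_abs] using hGb t ht
    calc ∫ t in Icc (0:ℝ) 1, G t ≤ ∫ t in Icc (0:ℝ) 1, B * p t := by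
          apply setIntegral_mono_on hGint hBpint measurableSet_Icc
          intro t ht
          exact (le_abs_self _).trans (hGb t ht)
      _ = B * ∫ t in Icc (0:ℝ) 1, p t := integral_const_mul B p
      _ = B := by rw [hp1, mul_one]
  constructor
  · have := main _ (c₂ * L * μR) (mul_nonneg (mul_nonneg ((hc₁.trans_le hc₁₂).le) hL0) hμR0) hG1meas hG1bound
    calc _ ≤ c₂ * L * μR := this
      _ = c₂ * c₃ / c₁ * μR * D := by rw [hLdef]; ring
  · have := main _ (c₂ * L ^ 2 * μR) (mul_nonneg (mul_nonneg ((hc₁.trans_le hc₁₂).le) (pow_nonneg hL0 2)) hμR0) hG2meas hG2bound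
    calc _ ≤ c₂ * L ^ 2 * μR := this
      _ = c₂ * μR * (c₃ / c₁) ^ 2 * D ^ 2 := by rw [hLdef]; ring
end
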